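/- Decomposition of total correlation for a bivariate process: C(X̄^T, Ȳ^T) = I(X̄^T; Ȳ^T) = T_{X→Y}^T + T_{Y→X}^T + R_{X,Y}^T, so the total correlation of the two trajectories equals the sum of the two directed transfer entropies and the residual entropy. -/
import Mathlib


open scoped BigOperators

noncomputable section

variable {Ω : Type*} [Fintype Ω] [DecidableEq Ω]

/-- Probability of the event `X = s` under the mass function `p`. -/
def prob (p : Ω → ℝ) {S : Type*} [DecidableEq S] (X : Ω → S) (s : S) : ℝ :=
  ∑ ω, if X ω = s then p ω else 0

/-- Shannon entropy of a finite-valued random variable. -/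
def entropy (p : Ω → ℝ) {S : Type*} [Fintype S] [DecidableEq S] (X : Ω → S) : ℝ :=
  -∑ s, prob p X s * Real.log (prob p X s)

/-- Conditional Shannon entropy `H(X | Y)`. -/
def condEntropy (p : Ω → ℝ) {S T' : Type*} [Fintype S] [DecidableEq S] [Fintype T']
    [DecidableEq T'] (X : Ω → S) (Y : Ω → T') : ℝ :=
  entropy p (fun ω => (X ω, Y ω)) - entropy p Y

/-- Mutual information `I(X; Y)`. -/
def mutualInfo (p : Ω → ℝ) {S T' : Type*} [Fintype S] [DecidableEq S] [Fintype T']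
    [DecidableEq T'] (X : Ω → S) (Y : Ω → T') : ℝ :=
  entropy p X - condEntropy p X Y

/-- Conditional mutual information `I(X; Y | Z)`. -/
def condMutualInfo (p : Ω → ℝ) {S T' U : Type*} [Fintype S] [DecidableEq S] [Fintype T']
    [DecidableEq T'] [Fintype U] [DecidableEq U] (X : Ω → S) (Y : Ω → T') (Z : Ω → U) : ℝ :=
  condEntropy p X Z - condEntropy p X (fun ω => (Y ω, Z ω))

/-- The past trajectory `X̄^{t-1} = (X^0, …, X^{t-1})` (0-indexed). -/
def past {S : Type*} (X : ℕ → Ω → S) (t : ℕ) (ω : Ω) : Fin t → S :=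
  fun k => X k ω

/-- `p` is a probability mass function. -/
def IsProb (p : Ω → ℝ) : Prop := (∀ ω, 0 ≤ p ω) ∧ ∑ ω, p ω = 1

/-- Conditional independence of `X` and `Y` given `Z` (for finite-valued random variables). -/
def CondIndep (p : Ω → ℝ) {S T' U : Type*} [DecidableEq S] [DecidableEq T'] [DecidableEq U]
    (X : Ω → S) (Y : Ω → T') (Z : Ω → U) : Prop :=
  ∀ s t u, prob p (fun ω => (X ω, Y ω, Z ω)) (s, t, u) * prob p Z u =
    prob p (fun ω => (X ω, Z ω)) (s, u) * prob p (fun ω => (Y ω, Z ω)) (t, u)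

/-- Pairwise transfer entropy `T_{Y→X}^T = Σ_t I(X^t; Ȳ^{t-1} | X̄^{t-1})` (from `Y` to `X`). -/
def pte (p : Ω → ℝ) {S T' : Type*} [Fintype S] [DecidableEq S] [Fintype T'] [DecidableEq T']
    (Y : ℕ → Ω → T') (X : ℕ → Ω → S) (T : ℕ) : ℝ :=
  ∑ t ∈ Finset.range T, condMutualInfo p (X t) (past Y t) (past X t)

/-- Entropy rate `H_X^T = Σ_t H(X^t | X̄^{t-1})`. -/
def entropyRate (p : Ω → ℝ) {S : Type*} [Fintype S] [DecidableEq S] (X : ℕ → Ω → S)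
    (T : ℕ) : ℝ :=
  ∑ t ∈ Finset.range T, condEntropy p (X t) (past X t)

/-- Free entropy `F_X^T = Σ_t H(X^t | X̄^{t-1}, Ȳ^{t-1})`. -/
def freeEntropy (p : Ω → ℝ) {S T' : Type*} [Fintype S] [DecidableEq S] [Fintype T']
    [DecidableEq T'] (X : ℕ → Ω → S) (Y : ℕ → Ω → T') (T : ℕ) : ℝ :=
  ∑ t ∈ Finset.range T, condEntropy p (X t) (fun ω => (past X t ω, past Y t ω))

/-- Residual entropy `R_{X,Y}^T = Σ_t I(X^t; Y^t | X̄^{t-1}, Ȳ^{t-1})`. -/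
def residualEntropy (p : Ω → ℝ) {S T' : Type*} [Fintype S] [DecidableEq S] [Fintype T']
    [DecidableEq T'] (X : ℕ → Ω → S) (Y : ℕ → Ω → T') (T : ℕ) : ℝ :=
  ∑ t ∈ Finset.range T, condMutualInfo p (X t) (Y t) (fun ω => (past X t ω, past Y t ω))


/-- Entropy is invariant under relabeling via an equivalence. -/
lemma entropy_comp_equiv (p : Ω → ℝ) {S U : Type*} [Fintype S] [DecidableEq S]
    [Fintype U] [DecidableEq U] (e : S ≃ U) (X : Ω → S) :
    entropy p (fun ω => e (X ω)) = entropy p X := by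
  have hprob : ∀ s, prob p (fun ω => e (X ω)) (e s) = prob p X s := by
    intro s
    unfold prob
    exact Finset.sum_congr rfl fun ω _ => by simp
  unfold entropy
  rw [← Equiv.sum_comp e
    (fun u => prob p (fun ω => e (X ω)) u * Real.log (prob p (fun ω => e (X ω)) u))]
  simp only [hprob]

lemma entropy_congr_equiv (p : Ω → ℝ) {S U : Type*} [Fintype S] [DecidableEq S]
    [Fintype U] [DecidableEq U] (e : S ≃ U) (X : Ω → S) (Z : Ω → U)
    (h : ∀ ω, Z ω = e (X ω)) : entropy p Z = entropy p X := by
  have : Z = fun ω => e (X ω) := funext h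
  rw [this, entropy_comp_equiv]

lemma entropy_of_subsingleton (p : Ω → ℝ) (hp : IsProb p) {S : Type*} [Fintype S]
    [DecidableEq S] [Subsingleton S] (X : Ω → S) : entropy p X = 0 := by
  unfold entropy
  have h1 : ∀ s : S, prob p X s = 1 := by
    intro s
    unfold prob
    rw [← hp.2]
    exact Finset.sum_congr rfl fun ω _ => by simp [Subsingleton.elim (X ω) s]
  simp [h1]

/-- Appending the current value to the past gives the longer past. -/
def mySnocEquiv (S : Type*) (t : ℕ) : S × (Fin t → S) ≃ (Fin (t + 1) → S) where
  toFun := fun q => Fin.snoc q.2 q.1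
  invFun := fun f => (f (Fin.last t), Fin.init f)
  left_inv := fun q => by simp
  right_inv := fun f => by simp

lemma snoc_past {S : Type*} (X : ℕ → Ω → S) (t : ℕ) (ω : Ω) :
    past X (t + 1) ω = Fin.snoc (past X t ω) (X t ω) := by
  funext k
  refine Fin.lastCases ?_ (fun j => ?_) k
  · simp [past, Fin.snoc_last]
  · simp [past, Fin.snoc_castSucc]

/-- Decomposition of total correlation of a bivariate process: the total correlation of
the two trajectories equals their mutual information, which equals
`T_{X→Y}^T + T_{Y→X}^T + R_{X,Y}^T`. -/
theorem totalCorrelation_bivariate_decomposition (p : Ω → ℝ) (hp : IsProb p)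
    {S T' : Type*} [Fintype S] [DecidableEq S] [Fintype T'] [DecidableEq T']
    (X : ℕ → Ω → S) (Y : ℕ → Ω → T') (T : ℕ) :
    entropy p (past X T) + entropy p (past Y T)
        - entropy p (fun ω => (past X T ω, past Y T ω)) =
      mutualInfo p (past X T) (past Y T)
    ∧ mutualInfo p (past X T) (past Y T) =
        pte p X Y T + pte p Y X T + residualEntropy p X Y T := by
  have hY : ∀ t, entropy p (fun ω => (Y t ω, past Y t ω)) = entropy p (past Y (t + 1)) :=
    fun t => (entropy_congr_equiv p (mySnocEquiv T' t) (fun ω => (Y t ω, past Y t ω))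
      (past Y (t + 1)) (fun ω => snoc_past Y t ω)).symm
  have hX : ∀ t, entropy p (fun ω => (X t ω, past X t ω)) = entropy p (past X (t + 1)) :=
    fun t => (entropy_congr_equiv p (mySnocEquiv S t) (fun ω => (X t ω, past X t ω))
      (past X (t + 1)) (fun ω => snoc_past X t ω)).symm
  have hJoint : ∀ t, entropy p (fun ω => (X t ω, (Y t ω, (past X t ω, past Y t ω)))) =
      entropy p (fun ω => (past X (t + 1) ω, past Y (t + 1) ω)) := by
    intro t
    refine (entropy_congr_equiv p
      (((Equiv.prodAssoc S T' _).symm).trans ((Equiv.prodProdProdComm S T' _ _).trans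
        ((mySnocEquiv S t).prodCongr (mySnocEquiv T' t))))
      (fun ω => (X t ω, (Y t ω, (past X t ω, past Y t ω))))
      (fun ω => (past X (t + 1) ω, past Y (t + 1) ω)) ?_).symm
    intro ω
    show (past X (t + 1) ω, past Y (t + 1) ω)
      = (Fin.snoc (past X t ω) (X t ω), Fin.snoc (past Y t ω) (Y t ω))
    rw [snoc_past X t ω, snoc_past Y t ω]
  have hswap1 : ∀ t, entropy p (fun ω => (X t ω, (past Y t ω, past X t ω))) =
      entropy p (fun ω => (X t ω, (past X t ω, past Y t ω))) := by
    intro t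
    exact entropy_congr_equiv p ((Equiv.refl S).prodCongr (Equiv.prodComm _ _))
      (fun ω => (X t ω, (past X t ω, past Y t ω)))
      (fun ω => (X t ω, (past Y t ω, past X t ω))) (fun ω => rfl)
  have hswap2 : ∀ t, entropy p (fun ω => (past Y t ω, past X t ω)) =
      entropy p (fun ω => (past X t ω, past Y t ω)) := by
    intro t
    exact entropy_congr_equiv p (Equiv.prodComm _ _)
      (fun ω => (past X t ω, past Y t ω))
      (fun ω => (past Y t ω, past X t ω)) (fun ω => rfl)
  set F : ℕ → ℝ := fun t => entropy p (past Y t) + entropy p (past X t)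
    - entropy p (fun ω => (past X t ω, past Y t ω)) with hF
  have main : pte p X Y T + pte p Y X T + residualEntropy p X Y T = F T - F 0 := by
    unfold pte residualEntropy
    rw [← Finset.sum_add_distrib, ← Finset.sum_add_distrib]
    rw [show F T - F 0 = ∑ t ∈ Finset.range T, (F (t + 1) - F t) from
      (Finset.sum_range_sub F T).symm]
    refine Finset.sum_congr rfl fun t _ => ?_
    simp only [condMutualInfo, condEntropy, hF]
    rw [hY t, hX t, hJoint t, hswap1 t, hswap2 t]
    ring
  have hF0 : F 0 = 0 := by
    show entropy p (past Y 0) + entropy p (past X 0)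
      - entropy p (fun ω => (past X 0 ω, past Y 0 ω)) = 0
    rw [entropy_of_subsingleton p hp (past Y 0), entropy_of_subsingleton p hp (past X 0),
      entropy_of_subsingleton p hp (fun ω => (past X 0 ω, past Y 0 ω))]
    ring
  constructor
  · simp only [mutualInfo, condEntropy]; ring
  · simp only [mutualInfo, condEntropy]
    rw [main, hF0, hF]
    ring

end
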